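/- If A is an M×N perfect quaternion array with entries in {±1, ±i, ±j, ±k} and A = A_h + A_v·j, then the matrices A_h − A_v and A_h + A_v have all entries in {1, i, −1, −i} and form a periodic complementary pair: R_{A_h−A_v}(m,n) + R_{A_h+A_v}(m,n) = 0 for all (m,n) ≠ (0,0). -/

import Mathlib

noncomputable section
open scoped BigOperators

/-- Embedding of ℂ into the quaternions (zero j and k components). -/
def cq (z : ℂ) : Quaternion ℝ := ⟨z.re, z.im, 0, 0⟩

/-- The quaternion unit i. -/
def qi : Quaternion ℝ := ⟨0, 1, 0, 0⟩

/-- The quaternion unit j. -/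
def qj : Quaternion ℝ := ⟨0, 0, 1, 0⟩

/-- The quaternion unit k. -/
def qk : Quaternion ℝ := ⟨0, 0, 0, 1⟩

/-- Conjugate-free periodic cross-correlation of quaternion matrices. -/
def qcorr {M N : ℕ} [NeZero M] [NeZero N]
    (X Y : Matrix (ZMod M) (ZMod N) (Quaternion ℝ)) :
    Matrix (ZMod M) (ZMod N) (Quaternion ℝ) :=
  fun m n => ∑ k, ∑ l, X k l * Y (k + m) (l + n)

/-- Right periodic autocorrelation of a quaternion matrix. -/
def Rq {M N : ℕ} [NeZero M] [NeZero N]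
    (A : Matrix (ZMod M) (ZMod N) (Quaternion ℝ)) :
    Matrix (ZMod M) (ZMod N) (Quaternion ℝ) :=
  qcorr A (fun k l => star (A k l))

/-- Conjugate-free periodic cross-correlation of complex matrices. -/
def ccorr {M N : ℕ} [NeZero M] [NeZero N]
    (X Y : Matrix (ZMod M) (ZMod N) ℂ) : Matrix (ZMod M) (ZMod N) ℂ :=
  fun m n => ∑ k, ∑ l, X k l * Y (k + m) (l + n)

/-- Complex 2D periodic autocorrelation. -/
def Rc {M N : ℕ} [NeZero M] [NeZero N]
    (A : Matrix (ZMod M) (ZMod N) ℂ) : Matrix (ZMod M) (ZMod N) ℂ :=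
  ccorr A (fun k l => star (A k l))

/-!
Write each entry as `a + b j` with `a b : ℂ`. Since `j z = z̄ j`, the product
`(a + b j)(c + d j)* = (a c̄ + b d̄) + (b c - a d) j`, so the complex part of `R_A` is
`R_{A_h} + R_{A_v}`, which vanishes off the origin when `A` is perfect. The parallelogram law
`R_{X-Y} + R_{X+Y} = 2 (R_X + R_Y)` then gives the complementary pair. The entry claim is a check
of the eight units: `(a, b)` is one of `(±1, 0), (±i, 0), (0, ±1), (0, ±i)`.
-/

open Quaternion

@[simp] lemma cq_re (z : ℂ) : (cq z).re = z.re := rfl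
@[simp] lemma cq_imI (z : ℂ) : (cq z).imI = z.im := rfl
@[simp] lemma cq_imJ (z : ℂ) : (cq z).imJ = 0 := rfl
@[simp] lemma cq_imK (z : ℂ) : (cq z).imK = 0 := rfl
@[simp] lemma qi_re : qi.re = 0 := rfl
@[simp] lemma qi_imI : qi.imI = 1 := rfl
@[simp] lemma qi_imJ : qi.imJ = 0 := rfl
@[simp] lemma qi_imK : qi.imK = 0 := rfl
@[simp] lemma qj_re : qj.re = 0 := rfl
@[simp] lemma qj_imI : qj.imI = 0 := rfl
@[simp] lemma qj_imJ : qj.imJ = 1 := rfl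
@[simp] lemma qj_imK : qj.imK = 0 := rfl
@[simp] lemma qk_re : qk.re = 0 := rfl
@[simp] lemma qk_imI : qk.imI = 0 := rfl
@[simp] lemma qk_imJ : qk.imJ = 0 := rfl
@[simp] lemma qk_imK : qk.imK = 1 := rfl

section SymplecticComponents

variable (a b : ℂ)

@[simp] lemma re_cq_add_cq_mul_qj : (cq a + cq b * qj).re = a.re := by simp [re_mul]
@[simp] lemma imI_cq_add_cq_mul_qj : (cq a + cq b * qj).imI = a.im := by
  simp [imI_mul]
@[simp] lemma imJ_cq_add_cq_mul_qj : (cq a + cq b * qj).imJ = b.re := by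
  simp [imJ_mul]
@[simp] lemma imK_cq_add_cq_mul_qj : (cq a + cq b * qj).imK = b.im := by
  simp [imK_mul]

end SymplecticComponents

lemma cq_add_cq_mul_qj_eq_zero_iff {a b : ℂ} : cq a + cq b * qj = 0 ↔ a = 0 ∧ b = 0 := by
  simp [Quaternion.ext_iff, Complex.ext_iff, and_assoc]

lemma cq_add_cq_mul_qj_mul_star (a b c d : ℂ) :
    (cq a + cq b * qj) * star (cq c + cq d * qj) =
      cq (a * star c + b * star d) + cq (b * c - a * d) * qj := by
  ext <;> simp [re_mul, imI_mul, imJ_mul, imK_mul] <;> ring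

def cqAddHom : ℂ →+ Quaternion ℝ where
  toFun := cq
  map_zero' := by ext <;> simp
  map_add' x y := by ext <;> simp

lemma sub_mem_and_add_mem_of_cq_add_cq_mul_qj_mem {a b : ℂ}
    (h : cq a + cq b * qj ∈ ({1, -1, qi, -qi, qj, -qj, qk, -qk} : Set (Quaternion ℝ))) :
    a - b ∈ ({1, Complex.I, -1, -Complex.I} : Set ℂ) ∧
      a + b ∈ ({1, Complex.I, -1, -Complex.I} : Set ℂ) := by
  simp only [Set.mem_insert_iff, Set.mem_singleton_iff] at h
  rcases h with h | h | h | h | h | h | h | h <;>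
  · simp [Quaternion.ext_iff] at h
    simp [Complex.ext_iff, h]

section Correlation

variable {M N : ℕ} [NeZero M] [NeZero N] (X Y : Matrix (ZMod M) (ZMod N) ℂ)

lemma Rq_cq_add_cq_mul_qj (m : ZMod M) (n : ZMod N) :
    Rq (fun k l => cq (X k l) + cq (Y k l) * qj) m n =
      cq (Rc X m n + Rc Y m n) + cq (ccorr Y X m n - ccorr X Y m n) * qj := by
  have hcq : (cq : ℂ → Quaternion ℝ) = cqAddHom := rfl
  simp only [Rq, qcorr, cq_add_cq_mul_qj_mul_star, Rc, ccorr]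
  simp only [hcq, ← Finset.sum_add_distrib, ← Finset.sum_sub_distrib, map_sum, Finset.sum_mul]

lemma Rc_sub_add_Rc_add (m : ZMod M) (n : ZMod N) :
    Rc (X - Y) m n + Rc (X + Y) m n = 2 * (Rc X m n + Rc Y m n) := by
  simp only [Rc, ccorr, Matrix.sub_apply, Matrix.add_apply, ← Finset.sum_add_distrib,
    Finset.mul_sum, star_sub, star_add]
  refine Finset.sum_congr rfl fun k _ => Finset.sum_congr rfl fun l _ => ?_
  ring

end Correlation

theorem quaternary_pcp_from_basic_unit_pqa {M N : ℕ} [NeZero M] [NeZero N]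
    (Ah Av : Matrix (ZMod M) (ZMod N) ℂ)
    (A : Matrix (ZMod M) (ZMod N) (Quaternion ℝ))
    (hA : ∀ k l, A k l = cq (Ah k l) + cq (Av k l) * qj)
    (halph : ∀ k l, A k l ∈ ({1, -1, qi, -qi, qj, -qj, qk, -qk} : Set (Quaternion ℝ)))
    (hperf : ∀ m n, (m, n) ≠ (0, 0) → Rq A m n = 0) :
    (∀ k l, (Ah k l - Av k l ∈ ({1, Complex.I, -1, -Complex.I} : Set ℂ)) ∧
            (Ah k l + Av k l ∈ ({1, Complex.I, -1, -Complex.I} : Set ℂ))) ∧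
    (∀ m n, (m, n) ≠ (0, 0) →
      Rc (Ah - Av) m n + Rc (Ah + Av) m n = 0) := by
  refine ⟨fun k l => sub_mem_and_add_mem_of_cq_add_cq_mul_qj_mem (hA k l ▸ halph k l),
    fun m n hmn => ?_⟩
  have hRq := hperf m n hmn
  rw [show A = _ from funext₂ hA, Rq_cq_add_cq_mul_qj, cq_add_cq_mul_qj_eq_zero_iff] at hRq
  rw [Rc_sub_add_Rc_add, hRq.1, mul_zero]
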